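/- arXiv:2009.07344 — 3 statements merged into one kernel-verified Lean document; each statement's English description precedes it below -/
import Mathlib

section
/- Fix e > 1 and a convex preorder ≽ on Φ_+. Let τ be a skew shape, ξ_1 a minimal SE-removable ribbon in τ, and ξ_2 a minimal SE-removable ribbon in τ∖ξ_1. Then cont(ξ_2) ≽ cont(ξ_1). -/
open Finset

abbrev Node : Type := ℤ × ℤ

/-- `v` is weakly southeast of `u` (product order). -/
def SE (u v : Node) : Prop := u.1 ≤ v.1 ∧ u.2 ≤ v.2

/-- `v` is weakly northeast of `u` (`u ↗ v`). -/
def NEr (u v : Node) : Prop := v.1 ≤ u.1 ∧ u.2 ≤ v.2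

/-- `v` is strictly northeast of `u` (`u ⇗ v`). -/
def SNE (u v : Node) : Prop := v.1 < u.1 ∧ u.2 < v.2

def IsSkew (τ : Finset Node) : Prop :=
  ∀ u ∈ τ, ∀ w ∈ τ, ∀ v : Node, SE u v → SE v w → v ∈ τ

def Adj (u v : Node) : Prop :=
  v = u + (1, 0) ∨ v = u + (-1, 0) ∨ v = u + (0, 1) ∨ v = u + (0, -1)

def PathIn (τ : Finset Node) (u v : Node) : Prop :=
  Relation.ReflTransGen (fun a b => a ∈ τ ∧ b ∈ τ ∧ Adj a b) u v

def IsConnectedShape (τ : Finset Node) : Prop :=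
  ∀ u ∈ τ, ∀ v ∈ τ, PathIn τ u v

def Cornered (τ : Finset Node) : Prop :=
  (∀ u ∈ τ, ∀ u' ∈ τ, (u + (1, 0) ∉ τ ∧ u + (0, -1) ∉ τ) →
      (u' + (1, 0) ∉ τ ∧ u' + (0, -1) ∉ τ) → u = u') ∧
  (∀ v ∈ τ, ∀ v' ∈ τ, (v + (-1, 0) ∉ τ ∧ v + (0, 1) ∉ τ) →
      (v' + (-1, 0) ∉ τ ∧ v' + (0, 1) ∉ τ) → v = v')

def DiagConvex (τ : Finset Node) : Prop :=
  ∀ u ∈ τ, ∀ w ∈ τ, ∀ v : Node,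
    u.2 - u.1 = v.2 - v.1 → v.2 - v.1 = w.2 - w.1 → SE u v → SE v w → v ∈ τ

def Thin (τ : Finset Node) : Prop :=
  ∀ u ∈ τ, ∀ v ∈ τ, u.2 - u.1 = v.2 - v.1 → u = v

def IsRibbon (ξ : Finset Node) : Prop :=
  ξ.Nonempty ∧ IsSkew ξ ∧ IsConnectedShape ξ ∧ Thin ξ

def MaxSW (τ : Finset Node) (u : Node) : Prop :=
  u ∈ τ ∧ ∀ v ∈ τ, NEr v u → v = u

def MaxNE (τ : Finset Node) (v : Node) : Prop :=
  v ∈ τ ∧ ∀ w ∈ τ, NEr v w → w = v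

def IsNEPath (z : ℕ → Node) (k : ℕ) : Prop :=
  ∀ i, i + 1 < k → z (i + 1) = z i + (-1, 0) ∨ z (i + 1) = z i + (0, 1)

def IsSEPath (z : ℕ → Node) (k : ℕ) : Prop :=
  ∀ i, i + 1 < k → z (i + 1) = z i + (1, 0) ∨ z (i + 1) = z i + (0, 1)

def SERemovable (τ μ : Finset Node) : Prop :=
  μ ⊆ τ ∧ ∀ u ∈ μ, ∀ v ∈ τ \ μ, ¬ SE u v

/-- Residue of a node, in `ZMod e`. -/
def res (e : ℕ) (u : Node) : ZMod e := ((u.2 - u.1 : ℤ) : ZMod e)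

/-- Content of a finite set of nodes, as an element of the free module on `ZMod e`. -/
def cont (e : ℕ) (τ : Finset Node) : ZMod e → ℤ :=
  fun i => ((τ.filter (fun u => res e u = i)).card : ℤ)

/-- `α(t,h) = α_t + α_{t+1} + ⋯ + α_{t+h-1}` (indices mod `e`). -/
def alphaR (e : ℕ) (t : ZMod e) (h : ℕ) : ZMod e → ℤ :=
  fun i => (((Finset.range h).filter (fun j : ℕ => t + ((j : ℕ) : ZMod e) = i)).card : ℤ)

def IsPosRoot (e : ℕ) (β : ZMod e → ℤ) : Prop :=
  ∃ t : ZMod e, ∃ h : ℕ, 1 ≤ h ∧ β = alphaR e t h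

/-- The null root `δ = α_0 + ⋯ + α_{e-1}`. -/
def deltaR (e : ℕ) : ZMod e → ℤ := fun _ => 1

/-- Imaginary elements: positive multiples of `δ`. -/
def IsImag (e : ℕ) (β : ZMod e → ℤ) : Prop :=
  ∃ m : ℕ, 1 ≤ m ∧ β = fun _ => (m : ℤ)

/-- Indivisible positive roots `Ψ`: real positive roots together with `δ`. -/
def IsIndiv (e : ℕ) (β : ZMod e → ℤ) : Prop :=
  (∃ t : ZMod e, ∃ h : ℕ, 1 ≤ h ∧ ¬ (e ∣ h) ∧ β = alphaR e t h) ∨ β = deltaR e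

/-- A convex preorder on the positive roots. -/
def ConvexPreorder (e : ℕ) (R : (ZMod e → ℤ) → (ZMod e → ℤ) → Prop) : Prop :=
  (∀ β, IsPosRoot e β → R β β) ∧
  (∀ β γ ν, IsPosRoot e β → IsPosRoot e γ → IsPosRoot e ν →
      R β γ → R γ ν → R β ν) ∧
  (∀ β γ, IsPosRoot e β → IsPosRoot e γ → (R β γ ∨ R γ β)) ∧
  (∀ β γ, IsPosRoot e β → IsPosRoot e γ → R β γ → IsPosRoot e (β + γ) →
      R β (β + γ) ∧ R (β + γ) γ) ∧
  (∀ β γ, IsPosRoot e β → IsPosRoot e γ →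
      ((R β γ ∧ R γ β) ↔ (β = γ ∨ (IsImag e β ∧ IsImag e γ))))

/-- `β ≻ γ`. -/
def StrictR (e : ℕ) (R : (ZMod e → ℤ) → (ZMod e → ℤ) → Prop)
    (β γ : ZMod e → ℤ) : Prop := R β γ ∧ ¬ R γ β

/-- `θ` is a sum of positive roots strictly smaller than `β`. -/
def SumRootsLt (e : ℕ) (R : (ZMod e → ℤ) → (ZMod e → ℤ) → Prop)
    (β θ : ZMod e → ℤ) : Prop :=
  ∃ k : ℕ, ∃ γ : Fin k → (ZMod e → ℤ),
    (∀ i, IsPosRoot e (γ i) ∧ StrictR e R β (γ i)) ∧ θ = ∑ i, γ i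

/-- `θ` is a sum of positive roots strictly greater than `β`. -/
def SumRootsGt (e : ℕ) (R : (ZMod e → ℤ) → (ZMod e → ℤ) → Prop)
    (β θ : ZMod e → ℤ) : Prop :=
  ∃ k : ℕ, ∃ γ : Fin k → (ZMod e → ℤ),
    (∀ i, IsPosRoot e (γ i) ∧ StrictR e R (γ i) β) ∧ θ = ∑ i, γ i

/-- A two-tile tableau `(λ1, λ2)` for `τ`. -/
def IsTableau2 (τ lam1 lam2 : Finset Node) : Prop :=
  IsSkew lam1 ∧ IsSkew lam2 ∧ Disjoint lam1 lam2 ∧ lam1 ∪ lam2 = τ ∧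
  ∀ u ∈ lam2, ∀ v ∈ lam1, ¬ SE u v

/-- A cuspidal skew shape (with respect to the preorder `R`). -/
def IsCuspidal (e : ℕ) (R : (ZMod e → ℤ) → (ZMod e → ℤ) → Prop)
    (τ : Finset Node) : Prop :=
  IsPosRoot e (cont e τ) ∧
  ∀ lam1 lam2 : Finset Node, IsTableau2 τ lam1 lam2 →
    SumRootsLt e R (cont e τ) (cont e lam1) ∧
    SumRootsGt e R (cont e τ) (cont e lam2)

/-- An SE-removable ribbon in `τ`. -/
def SERemRibbon (τ ξ : Finset Node) : Prop := IsRibbon ξ ∧ SERemovable τ ξ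

/-- A minimal SE-removable ribbon in `τ`. -/
def MinSERem (e : ℕ) (R : (ZMod e → ℤ) → (ZMod e → ℤ) → Prop)
    (τ ξ : Finset Node) : Prop :=
  SERemRibbon τ ξ ∧ ∀ ν, SERemRibbon τ ν → R (cont e ν) (cont e ξ)

/-! A node of a thin SE-removable subset of `τ` is the south-east-most node of `τ` on its
diagonal, so SE-removable ribbons are pieces of the *rim* of `τ`; conversely the rim over an
interval of occupied diagonals is a ribbon, and it is SE-removable as soon as no east or south
neighbour in `τ` leaves that interval. If the diagonals of `ξ₁` and `ξ₂` overlap, the rim of `τ`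
over the diagonals of `ξ₂` is such a ribbon with the content of `ξ₂`, and minimality of `ξ₁`
concludes. Otherwise either `ξ₂` is already SE-removable in `τ`, or `ξ₁ ∪ ξ₂` is an SE-removable
ribbon of `τ`; then `cont ξ₁ + cont ξ₂ ≽ cont ξ₁`, and convexity forces `cont ξ₂ ≽ cont ξ₁`. -/

def diagonal (u : Node) : ℤ := u.2 - u.1

def diagonals (μ : Finset Node) : Finset ℤ := μ.image diagonal

lemma diagonal_mem_diagonals {μ : Finset Node} {u : Node} (hu : u ∈ μ) :
    diagonal u ∈ diagonals μ :=
  mem_image_of_mem _ hu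

lemma SE.trans {u v w : Node} (h : SE u v) (h' : SE v w) : SE u w :=
  ⟨h.1.trans h'.1, h.2.trans h'.2⟩

lemma SE.antisymm {u v : Node} (h : SE u v) (h' : SE v u) : u = v :=
  Prod.ext (le_antisymm h.1 h'.1) (le_antisymm h.2 h'.2)

lemma se_or_se_of_diagonal_eq {u v : Node} (h : diagonal u = diagonal v) :
    SE u v ∨ SE v u := by
  unfold SE; unfold diagonal at h; omega

lemma IsSkew.exists_diagonal_eq_of_se {τ : Finset Node} (hτ : IsSkew τ) {u v : Node}
    (hu : u ∈ τ) (hv : v ∈ τ) (huv : SE u v) {g : ℤ}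
    (h1 : min (diagonal u) (diagonal v) ≤ g) (h2 : g ≤ max (diagonal u) (diagonal v)) :
    ∃ w ∈ τ, diagonal w = g ∧ SE u w := by
  unfold SE at huv
  unfold diagonal at h1 h2
  rcases le_or_gt (u.2 - u.1) g with hg | hg
  · refine ⟨(u.1, u.1 + g), hτ u hu v hv _ ?_ ?_, ?_, ?_⟩ <;> simp only [SE, diagonal] <;> omega
  · refine ⟨(u.2 - g, u.2), hτ u hu v hv _ ?_ ?_, ?_, ?_⟩ <;> simp only [SE, diagonal] <;> omega

def IsRimNode (τ : Finset Node) (u : Node) : Prop :=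
  u ∈ τ ∧ ∀ v ∈ τ, diagonal v = diagonal u → SE v u

lemma IsRimNode.eq_of_diagonal_eq {τ : Finset Node} {u v : Node} (hu : IsRimNode τ u)
    (hv : IsRimNode τ v) (h : diagonal u = diagonal v) : u = v :=
  (hv.2 u hu.1 h).antisymm (hu.2 v hv.1 h.symm)

lemma exists_isRimNode {τ : Finset Node} {g : ℤ} (hg : g ∈ diagonals τ) :
    ∃ u, IsRimNode τ u ∧ diagonal u = g := by
  obtain ⟨v, hv, rfl⟩ := mem_image.mp hg
  obtain ⟨u, hu, hmax⟩ := (τ.filter (diagonal · = diagonal v)).exists_max_image Prod.fst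
    ⟨v, mem_filter.mpr ⟨hv, rfl⟩⟩
  rw [mem_filter] at hu
  refine ⟨u, ⟨hu.1, fun w hw hwu => ?_⟩, hu.2⟩
  have := hmax w (mem_filter.mpr ⟨hw, hwu.trans hu.2⟩)
  unfold SE; unfold diagonal at hwu; omega

lemma IsRimNode.of_se {τ : Finset Node} (hτ : IsSkew τ) {u v : Node} (hu : IsRimNode τ u)
    (hv : v ∈ τ) (huv : SE u v) : IsRimNode τ v := by
  refine ⟨hv, fun w hw hwv => ?_⟩
  rcases se_or_se_of_diagonal_eq hwv with h | hvw
  · exact h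
  -- shifting `u` along its diagonal by the offset from `v` to `w` stays in `τ`
  have hx := hu.2 (u.1 + (w.1 - v.1), u.2 + (w.1 - v.1))
    (hτ u hu.1 w hw _ (by unfold SE at *; omega) (by unfold SE diagonal at *; omega))
    (by unfold diagonal; ring)
  unfold SE diagonal at *
  simp only at hx
  omega

lemma IsRimNode.fst_eq_of_se {τ : Finset Node} (hτ : IsSkew τ) {u w : Node}
    (hu : IsRimNode τ u) (hw : w ∈ τ) (huw : SE u w) (hd : diagonal u ≤ diagonal w) :
    u.1 = w.1 := by
  by_contra hne
  have hx := hu.2 (u.1 + 1, u.2 + 1)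
    (hτ u hu.1 w hw _ (by unfold SE at *; omega) (by unfold SE diagonal at *; omega))
    (by unfold diagonal; ring)
  unfold SE at hx; simp only at hx; omega

lemma IsRimNode.snd_eq_of_se {τ : Finset Node} (hτ : IsSkew τ) {u w : Node}
    (hu : IsRimNode τ u) (hw : w ∈ τ) (huw : SE u w) (hd : diagonal w ≤ diagonal u) :
    u.2 = w.2 := by
  by_contra hne
  have hx := hu.2 (u.1 + 1, u.2 + 1)
    (hτ u hu.1 w hw _ (by unfold SE at *; omega) (by unfold SE diagonal at *; omega))
    (by unfold diagonal; ring)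
  unfold SE at hx; simp only at hx; omega

lemma IsRimNode.adj_of_diagonal_eq_add_one {τ : Finset Node} (hτ : IsSkew τ) {u w : Node}
    (hu : IsRimNode τ u) (hw : IsRimNode τ w) (hd : diagonal w = diagonal u + 1) :
    Adj u w := by
  unfold diagonal at hd
  have hle : w.1 ≤ u.1 := by
    by_contra hlt
    have hx := hu.2 (w.1, w.2 - 1)
      (hτ u hu.1 w hw.1 _ (by unfold SE; omega) (by unfold SE; omega))
      (by unfold diagonal; omega)
    unfold SE at hx; simp only at hx; omega
  have hge : u.1 - 1 ≤ w.1 := by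
    by_contra hlt
    have hy := hw.2 (u.1 - 1, u.2)
      (hτ w hw.1 u hu.1 _ (by unfold SE; omega) (by unfold SE; omega))
      (by unfold diagonal; omega)
    unfold SE at hy; simp only at hy; omega
  unfold Adj
  simp only [Prod.ext_iff, Prod.fst_add, Prod.snd_add]
  omega

lemma SERemovable.mem_of_se {τ μ : Finset Node} (h : SERemovable τ μ) {u v : Node}
    (hu : u ∈ μ) (hv : v ∈ τ) (huv : SE u v) : v ∈ μ :=
  by_contra fun hvμ => h.2 u hu v (mem_sdiff.mpr ⟨hv, hvμ⟩) huv

lemma seRemovable_of_forall_add_mem {τ μ : Finset Node} (hτ : IsSkew τ) (hμ : μ ⊆ τ)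
    (h : ∀ u ∈ μ, ∀ δ : Node, (δ = (1, 0) ∨ δ = (0, 1)) → u + δ ∈ τ → u + δ ∈ μ) :
    SERemovable τ μ := by
  suffices hn : ∀ n : ℕ, ∀ u ∈ μ, ∀ v ∈ τ, SE u v → (v.1 - u.1) + (v.2 - u.2) = n → v ∈ μ from
    ⟨hμ, fun u hu v hv huv => (mem_sdiff.mp hv).2 <| hn _ u hu v (mem_sdiff.mp hv).1 huv
      (Int.toNat_of_nonneg (by unfold SE at huv; omega)).symm⟩
  intro n
  induction n with
  | zero =>
    intro u hu v _ huv hn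
    unfold SE at huv
    rwa [show v = u from Prod.ext (by omega) (by omega)]
  | succ n ih =>
    intro u hu v hv huv hn
    unfold SE at huv
    obtain ⟨δ, hδ, hδv⟩ : ∃ δ : Node, (δ = (1, 0) ∨ δ = (0, 1)) ∧ SE (u + δ) v := by
      rcases lt_or_eq_of_le huv.1 with h1 | h1
      · exact ⟨(1, 0), Or.inl rfl, by simp only [SE, Prod.fst_add, Prod.snd_add]; omega⟩
      · exact ⟨(0, 1), Or.inr rfl, by simp only [SE, Prod.fst_add, Prod.snd_add]; omega⟩
    have huδ : SE u (u + δ) := by rcases hδ with rfl | rfl <;> simp [SE]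
    refine ih (u + δ) (h u hu δ hδ (hτ u (hμ hu) v hv _ huδ hδv)) v hv hδv ?_
    rcases hδ with rfl | rfl <;> simp only [Prod.fst_add, Prod.snd_add] <;> omega

lemma SERemovable.isRimNode {τ μ : Finset Node} (h : SERemovable τ μ) (hthin : Thin μ)
    {u : Node} (hu : u ∈ μ) : IsRimNode τ u := by
  refine ⟨h.1 hu, fun v hv hvu => ?_⟩
  rcases se_or_se_of_diagonal_eq hvu with hvu' | huv
  · exact hvu'
  · rw [hthin v (h.mem_of_se hu hv huv) u hu hvu]
    exact ⟨le_rfl, le_rfl⟩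

lemma SERemovable.union_sdiff {τ ξ₁ ξ₂ : Finset Node} (h₁ : SERemovable τ ξ₁)
    (h₂ : SERemovable (τ \ ξ₁) ξ₂) : SERemovable τ (ξ₁ ∪ ξ₂) := by
  refine ⟨union_subset h₁.1 fun u hu => (mem_sdiff.mp (h₂.1 hu)).1, fun u hu v hv huv => ?_⟩
  simp only [mem_sdiff, mem_union, not_or] at hv
  rcases mem_union.mp hu with hu | hu
  · exact hv.2.1 (h₁.mem_of_se hu hv.1 huv)
  · exact hv.2.2 (h₂.mem_of_se hu (mem_sdiff.mpr ⟨hv.1, hv.2.1⟩) huv)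

open Classical in
noncomputable def rim (τ : Finset Node) (D : Finset ℤ) : Finset Node :=
  τ.filter fun u => diagonal u ∈ D ∧ IsRimNode τ u

lemma mem_rim {τ : Finset Node} {D : Finset ℤ} {u : Node} :
    u ∈ rim τ D ↔ diagonal u ∈ D ∧ IsRimNode τ u := by
  simp only [rim, mem_filter]
  exact ⟨fun h => h.2, fun h => ⟨h.2.1, h⟩⟩

lemma thin_rim (τ : Finset Node) (D : Finset ℤ) : Thin (rim τ D) :=
  fun _ hu _ hv h => (mem_rim.mp hu).2.eq_of_diagonal_eq (mem_rim.mp hv).2 h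

lemma diagonals_rim {τ : Finset Node} {D : Finset ℤ} (hD : D ⊆ diagonals τ) :
    diagonals (rim τ D) = D := by
  ext g
  refine ⟨fun hg => ?_, fun hg => ?_⟩
  · obtain ⟨u, hu, rfl⟩ := mem_image.mp hg
    exact (mem_rim.mp hu).1
  · obtain ⟨u, hu, rfl⟩ := exists_isRimNode (hD hg)
    exact diagonal_mem_diagonals (mem_rim.mpr ⟨hg, hu⟩)

lemma SERemovable.eq_rim {τ μ : Finset Node} (h : SERemovable τ μ) (hthin : Thin μ) :
    μ = rim τ (diagonals μ) := by
  ext u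
  refine ⟨fun hu => mem_rim.mpr ⟨diagonal_mem_diagonals hu, h.isRimNode hthin hu⟩,
    fun hu => ?_⟩
  obtain ⟨hd, hrim⟩ := mem_rim.mp hu
  obtain ⟨v, hv, hvu⟩ := mem_image.mp hd
  exact h.mem_of_se hv hrim.1 (hrim.2 v (h.1 hv) hvu)

lemma seRemovable_rim {τ : Finset Node} (hτ : IsSkew τ) {D : Finset ℤ}
    (h : ∀ u ∈ rim τ D, ∀ δ : Node, (δ = (1, 0) ∨ δ = (0, 1)) → u + δ ∈ τ →
      diagonal (u + δ) ∈ D) :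
    SERemovable τ (rim τ D) :=
  seRemovable_of_forall_add_mem hτ (fun _ hu => (mem_rim.mp hu).2.1) fun u hu δ hδ huδ =>
    mem_rim.mpr ⟨h u hu δ hδ huδ, (mem_rim.mp hu).2.of_se hτ huδ (by
      rcases hδ with rfl | rfl <;> simp [SE])⟩

lemma isSkew_rim {τ : Finset Node} (hτ : IsSkew τ) (s t : ℤ) : IsSkew (rim τ (Icc s t)) := by
  intro u hu w hw v huv hvw
  obtain ⟨hdu, hu⟩ := mem_rim.mp hu
  obtain ⟨hdw, hw⟩ := mem_rim.mp hw
  have hv := hτ u hu.1 w hw.1 v huv hvw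
  refine mem_rim.mpr ⟨?_, hu.of_se hτ hv huv⟩
  rw [mem_Icc] at hdu hdw ⊢
  rcases le_total (diagonal u) (diagonal w) with hd | hd
  · have := hu.fst_eq_of_se hτ hw.1 (huv.trans hvw) hd
    unfold SE diagonal at *; omega
  · have := hu.snd_eq_of_se hτ hw.1 (huv.trans hvw) hd
    unfold SE diagonal at *; omega

lemma Adj.symm {u v : Node} (h : Adj u v) : Adj v u := by
  unfold Adj at *
  simp only [Prod.ext_iff, Prod.fst_add, Prod.snd_add] at *
  omega

lemma Adj.diagonal_eq {u v : Node} (h : Adj u v) :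
    diagonal v = diagonal u + 1 ∨ diagonal v = diagonal u - 1 := by
  unfold Adj at h
  simp only [Prod.ext_iff, Prod.fst_add, Prod.snd_add] at h
  unfold diagonal
  omega

lemma PathIn.symm {σ : Finset Node} {u v : Node} (h : PathIn σ u v) : PathIn σ v u :=
  Relation.reflTransGen_swap.mp
    (Relation.ReflTransGen.mono (fun _ _ hab => ⟨hab.2.1, hab.1, hab.2.2.symm⟩) _ _ h)

lemma PathIn.exists_diagonal_eq {σ : Finset Node} {u v : Node} (hp : PathIn σ u v)
    (hv : v ∈ σ) {g : ℤ} (h₁ : min (diagonal u) (diagonal v) ≤ g)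
    (h₂ : g ≤ max (diagonal u) (diagonal v)) : ∃ w ∈ σ, diagonal w = g := by
  induction hp using Relation.ReflTransGen.head_induction_on with
  | refl => exact ⟨v, hv, by omega⟩
  | @head a b hab _ ih =>
    by_cases hg : min (diagonal b) (diagonal v) ≤ g ∧ g ≤ max (diagonal b) (diagonal v)
    · exact ih hg.1 hg.2
    · have := hab.2.2.diagonal_eq
      exact ⟨a, hab.1, by omega⟩

lemma IsRibbon.diagonals_eq_Icc {ξ : Finset Node} (h : IsRibbon ξ) :
    ∃ a b, a ≤ b ∧ diagonals ξ = Icc a b := by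
  have hne : (diagonals ξ).Nonempty := h.1.image _
  refine ⟨(diagonals ξ).min' hne, (diagonals ξ).max' hne, min'_le _ _ (max'_mem _ hne), ?_⟩
  ext g
  refine ⟨fun hg => mem_Icc.mpr ⟨min'_le _ _ hg, le_max' _ _ hg⟩, fun hg => ?_⟩
  rw [mem_Icc] at hg
  obtain ⟨u, hu, hua⟩ := mem_image.mp (min'_mem _ hne)
  obtain ⟨v, hv, hvb⟩ := mem_image.mp (max'_mem _ hne)
  obtain ⟨w, hw, rfl⟩ := (h.2.2.1 u hu v hv).exists_diagonal_eq hv (g := g) (by omega) (by omega)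
  exact diagonal_mem_diagonals hw

lemma isConnectedShape_rim {τ : Finset Node} (hτ : IsSkew τ) {s t : ℤ}
    (hD : Icc s t ⊆ diagonals τ) : IsConnectedShape (rim τ (Icc s t)) := by
  intro u hu v hv
  have hdu := mem_Icc.mp (mem_rim.mp hu).1
  have hdv := mem_Icc.mp (mem_rim.mp hv).1
  have hs : s ∈ Icc s t := mem_Icc.mpr ⟨le_rfl, by omega⟩
  obtain ⟨r, hr, hrs⟩ := exists_isRimNode (hD hs)
  have hpath : ∀ g, s ≤ g → g ≤ t → ∀ w ∈ rim τ (Icc s t), diagonal w = g →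
      PathIn (rim τ (Icc s t)) r w := by
    intro g hg
    induction g, hg using Int.leInduction with
    | base =>
      intro _ w hw hws
      rw [hr.eq_of_diagonal_eq (mem_rim.mp hw).2 (hrs.trans hws.symm)]
      exact Relation.ReflTransGen.refl
    | succ g hsg ih =>
      intro hgt w hw hwg
      have hgD : g ∈ Icc s t := mem_Icc.mpr ⟨hsg, by omega⟩
      obtain ⟨x, hx, hxg⟩ := exists_isRimNode (hD hgD)
      have hxρ : x ∈ rim τ (Icc s t) := mem_rim.mpr ⟨hxg ▸ hgD, hx⟩
      exact (ih (by omega) x hxρ hxg).tail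
        ⟨hxρ, hw, hx.adj_of_diagonal_eq_add_one hτ (mem_rim.mp hw).2 (by omega)⟩
  exact (hpath _ hdu.1 hdu.2 u hu rfl).symm.trans (hpath _ hdv.1 hdv.2 v hv rfl)

lemma isRibbon_rim {τ : Finset Node} (hτ : IsSkew τ) {s t : ℤ} (hst : s ≤ t)
    (hD : Icc s t ⊆ diagonals τ) : IsRibbon (rim τ (Icc s t)) := by
  have hs : s ∈ Icc s t := mem_Icc.mpr ⟨le_rfl, hst⟩
  obtain ⟨r, hr, hrs⟩ := exists_isRimNode (hD hs)
  exact ⟨⟨r, mem_rim.mpr ⟨hrs ▸ hs, hr⟩⟩, isSkew_rim hτ s t, isConnectedShape_rim hτ hD,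
    thin_rim _ _⟩

lemma Thin.union {μ ν : Finset Node} (hμ : Thin μ) (hν : Thin ν)
    (hd : Disjoint (diagonals μ) (diagonals ν)) : Thin (μ ∪ ν) := by
  intro u hu v hv huv
  have hne : ∀ {x y}, x ∈ μ → y ∈ ν → diagonal x ≠ diagonal y := fun hx hy hxy =>
    disjoint_left.mp hd (diagonal_mem_diagonals hx) (hxy ▸ diagonal_mem_diagonals hy)
  rcases mem_union.mp hu with hu | hu <;> rcases mem_union.mp hv with hv | hv
  · exact hμ u hu v hv huv
  · exact absurd huv (hne hu hv)
  · exact absurd huv.symm (hne hv hu)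
  · exact hν u hu v hv huv

lemma cont_union (e : ℕ) {μ ν : Finset Node} (h : Disjoint μ ν) :
    cont e (μ ∪ ν) = cont e μ + cont e ν := by
  funext i
  simp only [cont, Pi.add_apply, filter_union,
    card_union_of_disjoint (disjoint_filter_filter h), Nat.cast_add]

lemma Thin.cont_apply {μ : Finset Node} (h : Thin μ) (e : ℕ) (i : ZMod e) :
    cont e μ i = #((diagonals μ).filter fun g : ℤ => (g : ZMod e) = i) := by
  rw [cont, diagonals, filter_image, card_image_of_injOn]
  · rfl
  · exact fun u hu v hv => h u (mem_filter.mp hu).1 v (mem_filter.mp hv).1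

lemma Thin.cont_eq_of_diagonals_eq {μ ν : Finset Node} (hμ : Thin μ) (hν : Thin ν)
    (h : diagonals μ = diagonals ν) (e : ℕ) : cont e μ = cont e ν :=
  funext fun i => by rw [hμ.cont_apply, hν.cont_apply, h]

lemma Thin.isPosRoot_cont {μ : Finset Node} (h : Thin μ) {a b : ℤ} (hab : a ≤ b)
    (hD : diagonals μ = Icc a b) (e : ℕ) : IsPosRoot e (cont e μ) := by
  refine ⟨a, (b - a + 1).toNat, by omega, funext fun i => ?_⟩
  rw [h.cont_apply, hD, alphaR]
  congr 1
  refine card_nbij' (fun g => (g - a).toNat) (fun j => a + j) ?_ ?_ ?_ ?_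
  · intro g hg
    simp only [coe_filter, mem_Icc, Set.mem_ofPred_eq, mem_range] at hg ⊢
    refine ⟨by omega, ?_⟩
    rw [← hg.2, ← Int.cast_natCast, Int.toNat_of_nonneg (by omega)]
    push_cast; ring
  · intro j hj
    simp only [coe_filter, mem_Icc, Set.mem_ofPred_eq, mem_range] at hj ⊢
    refine ⟨by omega, ?_⟩
    rw [← hj.2]
    push_cast; ring
  · intro g hg
    simp only [coe_filter, mem_Icc, Set.mem_ofPred_eq] at hg
    simp only
    omega
  · intro j hj
    simp

lemma IsRibbon.isPosRoot_cont {ξ : Finset Node} (h : IsRibbon ξ) (e : ℕ) :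
    IsPosRoot e (cont e ξ) :=
  let ⟨_, _, hab, hD⟩ := h.diagonals_eq_Icc
  h.2.2.2.isPosRoot_cont hab hD e

lemma IsPosRoot.exists_pos {e : ℕ} {β : ZMod e → ℤ} (h : IsPosRoot e β) : ∃ i, 0 < β i := by
  obtain ⟨t, n, hn, rfl⟩ := h
  refine ⟨t, ?_⟩
  unfold alphaR
  exact_mod_cast card_pos.mpr ⟨0, by simp only [mem_filter, mem_range, Nat.cast_zero, add_zero, and_true]; omega⟩

lemma ConvexPreorder.le_of_add_le {e : ℕ} {R : (ZMod e → ℤ) → (ZMod e → ℤ) → Prop}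
    (hR : ConvexPreorder e R) {β γ : ZMod e → ℤ} (hβ : IsPosRoot e β) (hγ : IsPosRoot e γ)
    (hβγ : IsPosRoot e (β + γ)) (h : R (β + γ) β) : R γ β := by
  obtain ⟨-, -, htotal, hconvex, hequiv⟩ := hR
  rcases htotal γ β hγ hβ with hγβ | hβγ'
  · exact hγβ
  obtain ⟨i, hi⟩ := hγ.exists_pos
  rcases (hequiv β (β + γ) hβ hβγ).mp ⟨(hconvex β γ hβ hγ hβγ' hβγ).1, h⟩ with
    heq | ⟨⟨m, hm, hβm⟩, ⟨n, -, hβγn⟩⟩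
  · have := congrFun heq i
    simp only [Pi.add_apply] at this
    omega
  · have hγ' : ∀ j, γ j = n - m := fun j => by
      have h₁ := congrFun hβm j
      have h₂ := congrFun hβγn j
      simp only [Pi.add_apply] at h₂
      omega
    refine ((hequiv γ β hγ hβ).mpr (Or.inr ⟨⟨n - m, ?_, funext fun j => ?_⟩, m, hm, hβm⟩)).1
    · have := hγ' i; omega
    · have := hγ' i; rw [hγ' j]; omega

lemma isRibbon_union_of_not_seRemovable {τ ξ₁ ξ₂ : Finset Node} (hτ : IsSkew τ)
    (hrem₁ : SERemovable τ ξ₁) (hrib₁ : IsRibbon ξ₁) (hrem₂ : SERemovable (τ \ ξ₁) ξ₂)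
    (hrib₂ : IsRibbon ξ₂) (hdisj : Disjoint (diagonals ξ₁) (diagonals ξ₂))
    (hnot : ¬ SERemovable τ ξ₂) : IsRibbon (ξ₁ ∪ ξ₂) := by
  have hrem := hrem₁.union_sdiff hrem₂
  have hsub₂ : ξ₂ ⊆ τ := fun u hu => (mem_sdiff.mp (hrem₂.1 hu)).1
  obtain ⟨u, hu, v, hv, huv⟩ : ∃ u ∈ ξ₂, ∃ v ∈ τ \ ξ₂, SE u v := by
    by_contra! h
    exact hnot ⟨hsub₂, h⟩
  have hv₁ : v ∈ ξ₁ := (mem_union.mp (hrem.mem_of_se (mem_union_right _ hu)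
    (mem_sdiff.mp hv).1 huv)).resolve_right (mem_sdiff.mp hv).2
  obtain ⟨a₁, b₁, hab₁, hD₁⟩ := hrib₁.diagonals_eq_Icc
  obtain ⟨a₂, b₂, hab₂, hD₂⟩ := hrib₂.diagonals_eq_Icc
  have hdu := diagonal_mem_diagonals hu
  have hdv := diagonal_mem_diagonals hv₁
  rw [hD₂, mem_Icc] at hdu
  rw [hD₁, mem_Icc] at hdv
  have hsep : b₁ < a₂ ∨ b₂ < a₁ := by
    by_contra! h
    rw [hD₁, hD₂] at hdisj
    exact disjoint_left.mp hdisj (show max a₁ a₂ ∈ Icc a₁ b₁ by rw [mem_Icc]; omega)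
      (by rw [mem_Icc]; omega)
  have hunion : diagonals (ξ₁ ∪ ξ₂) = Icc a₁ b₁ ∪ Icc a₂ b₂ := by
    rw [← hD₁, ← hD₂]
    exact image_union _ _
  -- the gap between the two intervals of diagonals is crossed by the rectangle from `u` to `v`
  have hD : diagonals (ξ₁ ∪ ξ₂) = Icc (min a₁ a₂) (max b₁ b₂) := by
    ext g
    rw [mem_Icc]
    refine ⟨fun hg => ?_, fun hg => ?_⟩
    · rw [hunion, mem_union, mem_Icc, mem_Icc] at hg
      omega
    by_cases hin : g ∈ Icc a₁ b₁ ∪ Icc a₂ b₂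
    · rwa [hunion]
    rw [mem_union, mem_Icc, mem_Icc] at hin
    obtain ⟨w, hw, rfl, huw⟩ := hτ.exists_diagonal_eq_of_se (hsub₂ hu) (hrem₁.1 hv₁) huv
      (g := g) (by omega) (by omega)
    exact diagonal_mem_diagonals (hrem.mem_of_se (mem_union_right _ hu) hw huw)
  rw [hrem.eq_rim (hrib₁.2.2.2.union hrib₂.2.2.2 hdisj), hD]
  exact isRibbon_rim hτ (by omega) (hD ▸ image_subset_image hrem.1)

lemma seRemovable_rim_of_not_disjoint {τ ξ₁ ξ₂ : Finset Node} (hτ : IsSkew τ)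
    (hrem₁ : SERemovable τ ξ₁) (hrib₁ : IsRibbon ξ₁) (hrem₂ : SERemovable (τ \ ξ₁) ξ₂)
    (hrib₂ : IsRibbon ξ₂) (hov : ¬ Disjoint (diagonals ξ₁) (diagonals ξ₂)) :
    SERemovable τ (rim τ (diagonals ξ₂)) := by
  have hrem := hrem₁.union_sdiff hrem₂
  have hsub₂ : ξ₂ ⊆ τ := fun u hu => (mem_sdiff.mp (hrem₂.1 hu)).1
  obtain ⟨a₁, b₁, -, hD₁⟩ := hrib₁.diagonals_eq_Icc
  obtain ⟨a₂, b₂, -, hD₂⟩ := hrib₂.diagonals_eq_Icc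
  obtain ⟨d, hd₁, hd₂⟩ := not_disjoint_iff.mp hov
  refine seRemovable_rim hτ fun u hu δ hδ huδ => ?_
  obtain ⟨hdu, hu⟩ := mem_rim.mp hu
  by_contra hdv
  have hδ' : 0 ≤ δ.1 ∧ 0 ≤ δ.2 ∧ (δ.2 - δ.1 = 1 ∨ δ.2 - δ.1 = -1) := by
    rcases hδ with rfl | rfl <;> simp
  obtain ⟨p, hp, hpu⟩ := mem_image.mp hdu
  have hpu' : SE p u := hu.2 p (hsub₂ hp) hpu
  have hu₁₂ : u ∈ ξ₁ ∪ ξ₂ := hrem.mem_of_se (mem_union_right _ hp) hu.1 hpu'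
  have hv₁ : u + δ ∈ ξ₁ := (mem_union.mp (hrem.mem_of_se hu₁₂ huδ
    (by unfold SE; simp only [Prod.fst_add, Prod.snd_add]; omega))).resolve_right
    fun h => hdv (diagonal_mem_diagonals h)
  -- `diagonal u` lies between the shared diagonal `d` and `diagonal (u + δ)`, both in `ξ₁`
  have hdu₁ : diagonal u ∈ diagonals ξ₁ := by
    have hdv₁ := diagonal_mem_diagonals hv₁
    rw [hD₁, mem_Icc] at hdv₁ hd₁ ⊢
    rw [hD₂, mem_Icc] at hdu hdv hd₂
    unfold diagonal at *
    simp only [Prod.fst_add, Prod.snd_add] at hdv₁ hdv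
    omega
  obtain ⟨q, hq, hqu⟩ := mem_image.mp hdu₁
  have hu₁ : u ∈ ξ₁ := hrem₁.mem_of_se hq hu.1 (hu.2 q (hrem₁.1 hq) hqu)
  have hpδ : SE p (p + δ) := by unfold SE; simp only [Prod.fst_add, Prod.snd_add]; omega
  have hpδτ : p + δ ∈ τ := hτ p (hsub₂ hp) (u + δ) huδ (p + δ) hpδ
    (by unfold SE at hpu' ⊢; simp only [Prod.fst_add, Prod.snd_add]; omega)
  have hdpδ : diagonal (p + δ) = diagonal (u + δ) := by
    unfold diagonal at hpu ⊢; simp only [Prod.fst_add, Prod.snd_add]; omega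
  have hpδ₁ : p + δ ∈ ξ₁ :=
    (mem_union.mp (hrem.mem_of_se (mem_union_right _ hp) hpδτ hpδ)).resolve_right
      fun h => hdv (hdpδ ▸ diagonal_mem_diagonals h)
  have hpu_eq : p = u := add_right_cancel (hrib₁.2.2.2 _ hpδ₁ _ hv₁ hdpδ)
  exact (mem_sdiff.mp (hrem₂.1 hp)).2 (hpu_eq ▸ hu₁)

theorem stmt16_general (e : ℕ)
    (R : (ZMod e → ℤ) → (ZMod e → ℤ) → Prop) (hR : ConvexPreorder e R)
    (τ ξ1 ξ2 : Finset Node) (hτ : IsSkew τ)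
    (h1 : MinSERem e R τ ξ1) (h2 : MinSERem e R (τ \ ξ1) ξ2) :
    R (cont e ξ2) (cont e ξ1) := by
  obtain ⟨⟨hrib1, hrem1⟩, hmin1⟩ := h1
  obtain ⟨⟨hrib2, hrem2⟩, -⟩ := h2
  by_cases hdisj : Disjoint (diagonals ξ1) (diagonals ξ2)
  · by_cases hrem2τ : SERemovable τ ξ2
    · exact hmin1 ξ2 ⟨hrib2, hrem2τ⟩
    have hrib := isRibbon_union_of_not_seRemovable hτ hrem1 hrib1 hrem2 hrib2 hdisj hrem2τ
    have hcont : cont e (ξ1 ∪ ξ2) = cont e ξ1 + cont e ξ2 :=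
      cont_union e (disjoint_left.mpr fun _ hu1 hu2 => (mem_sdiff.mp (hrem2.1 hu2)).2 hu1)
    have hle := hmin1 _ ⟨hrib, hrem1.union_sdiff hrem2⟩
    rw [hcont] at hle
    exact hR.le_of_add_le (hrib1.isPosRoot_cont e) (hrib2.isPosRoot_cont e)
      (hcont ▸ hrib.isPosRoot_cont e) hle
  · have hsub : diagonals ξ2 ⊆ diagonals τ :=
      image_subset_image fun _ hu => (mem_sdiff.mp (hrem2.1 hu)).1
    have hρ : IsRibbon (rim τ (diagonals ξ2)) := by
      obtain ⟨a, b, hab, hD⟩ := hrib2.diagonals_eq_Icc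
      rw [hD] at hsub ⊢
      exact isRibbon_rim hτ hab hsub
    have hle := hmin1 _ ⟨hρ, seRemovable_rim_of_not_disjoint hτ hrem1 hrib1 hrem2 hrib2 hdisj⟩
    rwa [(thin_rim τ _).cont_eq_of_diagonals_eq hrib2.2.2.2 (diagonals_rim hsub)] at hle

theorem stmt16 (e : ℕ) (he : 1 < e)
    (R : (ZMod e → ℤ) → (ZMod e → ℤ) → Prop) (hR : ConvexPreorder e R)
    (τ ξ1 ξ2 : Finset Node) (hτ : IsSkew τ)
    (h1 : MinSERem e R τ ξ1) (h2 : MinSERem e R (τ \ ξ1) ξ2) :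
    R (cont e ξ2) (cont e ξ1) :=
  stmt16_general e R hR τ ξ1 ξ2 hτ h1 h2
end

section
/- Fix e > 1, t ∈ ℤ/e, and a convex preorder ≽. Let ζ^t = ζ^{(δ,b)} be the cuspidal ribbon of content δ starting at a node b with res(b) = t. Then the translates of ζ^t by vectors of residue 0 tile ℤ×ℤ: for every node u ∈ ℤ×ℤ there is a unique node b' with res(b') = t such that u ∈ ζ^{(δ,b')}. -/
open Finset

open Classical in
/-- The N/E path defining the cuspidal ribbon `ζ^{(β,b)}`. -/
noncomputable def zetaPath (e : ℕ) (R : (ZMod e → ℤ) → (ZMod e → ℤ) → Prop)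
    (β : ZMod e → ℤ) (b : Node) : ℕ → Node
  | 0 => b
  | i + 1 =>
      if StrictR e R (alphaR e (res e b) (i + 1)) β then
        zetaPath e R β b i + (-1, 0)
      else
        zetaPath e R β b i + (0, 1)

/-- The cuspidal ribbon `ζ^{(β,b)}`, with `h = ht β` nodes. -/
noncomputable def zetaShape (e : ℕ) (R : (ZMod e → ℤ) → (ZMod e → ℤ) → Prop)
    (β : ZMod e → ℤ) (b : Node) (h : ℕ) : Finset Node :=
  (Finset.range h).image (zetaPath e R β b)


section Aux18
variable (e : ℕ) (R : (ZMod e → ℤ) → (ZMod e → ℤ) → Prop) (β : ZMod e → ℤ)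

lemma res_add18 (a b : Node) : res e (a + b) = res e a + res e b := by
  simp only [res, Prod.snd_add, Prod.fst_add]
  push_cast; ring

lemma res_sub18 (a b : Node) : res e (a - b) = res e a - res e b := by
  simp only [res, Prod.snd_sub, Prod.fst_sub]
  push_cast; ring

lemma zetaPath_add18 (b c : Node) (hc : res e c = 0) (i : ℕ) :
    zetaPath e R β (b + c) i = zetaPath e R β b i + c := by
  have hres : res e (b + c) = res e b := by rw [res_add18, hc, add_zero]
  induction i with
  | zero => rfl
  | succ i ih =>
      simp only [zetaPath]
      rw [hres]
      split_ifs <;> rw [ih, add_right_comm]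

lemma zetaPath_diag18 (b : Node) (i : ℕ) :
    (zetaPath e R β b i).2 - (zetaPath e R β b i).1 = b.2 - b.1 + i := by
  induction i with
  | zero => simp [zetaPath]
  | succ i ih =>
      simp only [zetaPath]
      split_ifs <;>
        simp only [Prod.snd_add, Prod.fst_add] <;> push_cast <;> omega

lemma res_zetaPath18 (b : Node) (i : ℕ) :
    res e (zetaPath e R β b i) = res e b + (i : ZMod e) := by
  simp only [res, zetaPath_diag18]
  push_cast; ring

lemma zetaPath_uniq18 {t : ZMod e} {b1 b2 : Node} (h1 : res e b1 = t) (h2 : res e b2 = t)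
    {i j : ℕ} (hi : i < e) (hj : j < e)
    (h : zetaPath e R β b1 i = zetaPath e R β b2 j) : b1 = b2 := by
  have hres : res e b1 + (i : ZMod e) = res e b2 + (j : ZMod e) := by
    rw [← res_zetaPath18, ← res_zetaPath18, h]
  have hij : (i : ZMod e) = (j : ZMod e) := by
    rw [h1, h2] at hres
    exact add_left_cancel hres
  have hije : i = j := by
    rwa [ZMod.natCast_eq_natCast_iff', Nat.mod_eq_of_lt hi, Nat.mod_eq_of_lt hj] at hij
  subst hije
  have hc : res e (b2 - b1) = 0 := by rw [res_sub18, h1, h2, sub_self]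
  have htr := zetaPath_add18 e R β b1 (b2 - b1) hc i
  rw [add_sub_cancel] at htr
  rw [htr] at h
  have hz : b2 - b1 = 0 := add_eq_left.mp h.symm
  have := sub_eq_zero.mp hz
  exact this.symm

end Aux18

theorem stmt18 (e : ℕ) (he : 1 < e)
    (R : (ZMod e → ℤ) → (ZMod e → ℤ) → Prop) (hR : ConvexPreorder e R)
    (t : ZMod e) (u : Node) :
    ∃! b : Node, res e b = t ∧ u ∈ zetaShape e R (deltaR e) b e := by
  haveI : NeZero e := ⟨by omega⟩
  set i : ℕ := (res e u - t).val with hidef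
  have hi : i < e := ZMod.val_lt _
  have hti : t + (i : ZMod e) = res e u := by
    rw [hidef, ZMod.natCast_zmod_val]; ring
  set b0 : Node := ((0 : ℤ), (t.val : ℤ)) with hb0
  have hres0 : res e b0 = t := by
    simp [res, hb0, ZMod.natCast_zmod_val]
  set c : Node := u - zetaPath e R (deltaR e) b0 i with hcdef
  have hc : res e c = 0 := by
    rw [hcdef, res_sub18, res_zetaPath18, hres0, hti, sub_self]
  refine ⟨b0 + c, ⟨by rw [res_add18, hres0, hc, add_zero], ?_⟩, ?_⟩
  · rw [zetaShape, Finset.mem_image]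
    exact ⟨i, Finset.mem_range.mpr hi, by rw [zetaPath_add18 e R _ b0 c hc i, hcdef, add_sub_cancel]⟩
  · rintro b' ⟨hb't, hb'mem⟩
    rw [zetaShape, Finset.mem_image] at hb'mem
    obtain ⟨j, hj, hju⟩ := hb'mem
    rw [Finset.mem_range] at hj
    have hbres : res e (b0 + c) = t := by rw [res_add18, hres0, hc, add_zero]
    have hbmem : zetaPath e R (deltaR e) (b0 + c) i = u := by
      rw [zetaPath_add18 e R _ b0 c hc i, hcdef, add_sub_cancel]
    exact zetaPath_uniq18 e R _ hb't hbres hj hi (by rw [hju, hbmem])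
end

section
/- Fix e > 1, t ∈ ℤ/e, a convex preorder ≽, and the cuspidal ribbon ζ^t of content δ with southwest node b^t of residue t. Let x^t = E(ζ^t_NE - b^t) and y^t = N(ζ^t_NE - b^t), where ζ^t_NE is the maximally northeast node of ζ^t, E adds (0,1) and N adds (-1,0). Then the set N_0 = {u ∈ ℤ×ℤ : u.2 ≡ u.1 (mod e)} of residue-0 nodes is a free ℤ-module with basis {x^t, y^t}. -/
open Finset

lemma zetaPath_diff (e : ℕ) (R : (ZMod e → ℤ) → (ZMod e → ℤ) → Prop)
    (β : ZMod e → ℤ) (b : Node) :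
    ∀ i : ℕ, (zetaPath e R β b i).2 - (zetaPath e R β b i).1 = b.2 - b.1 + i := by
  intro i
  induction i with
  | zero => simp [zetaPath]
  | succ n ih =>
    rw [zetaPath]
    split <;> simp [Prod.add_def] <;> push_cast <;> omega

theorem stmt19 (e : ℕ) (he : 1 < e)
    (R : (ZMod e → ℤ) → (ZMod e → ℤ) → Prop) (hR : ConvexPreorder e R)
    (t : ZMod e) (b : Node) (hb : res e b = t)
    (x y : Node)
    (hx : x = zetaPath e R (deltaR e) b (e - 1) - b + (0, 1))
    (hy : y = zetaPath e R (deltaR e) b (e - 1) - b + (-1, 0)) :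
    res e x = 0 ∧ res e y = 0 ∧
    ∀ u : Node, res e u = 0 → ∃! p : ℤ × ℤ, p.1 • x + p.2 • y = u := by
  set z := zetaPath e R (deltaR e) b (e - 1) with hzdef
  have hz : z.2 - z.1 = b.2 - b.1 + ((e - 1 : ℕ) : ℤ) := zetaPath_diff e R _ b _
  have hx1 : x.1 = z.1 - b.1 := by rw [hx]; simp [Prod.sub_def, Prod.add_def]
  have hx2 : x.2 = z.2 - b.2 + 1 := by rw [hx]; simp [Prod.sub_def, Prod.add_def]
  have hy1 : y.1 = z.1 - b.1 - 1 := by rw [hy]; simp [Prod.sub_def, Prod.add_def]; ring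
  have hy2 : y.2 = z.2 - b.2 := by rw [hy]; simp [Prod.sub_def, Prod.add_def]
  have hxd : x.2 - x.1 = (e : ℤ) := by omega
  have hyd : y.2 - y.1 = (e : ℤ) := by omega
  have hresx : res e x = 0 := by
    rw [res, hxd]; exact_mod_cast ZMod.natCast_self e
  have hresy : res e y = 0 := by
    rw [res, hyd]; exact_mod_cast ZMod.natCast_self e
  refine ⟨hresx, hresy, ?_⟩
  intro u hu
  have hdvd : (e : ℤ) ∣ u.2 - u.1 := by
    rwa [res, ZMod.intCast_zmod_eq_zero_iff_dvd] at hu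
  obtain ⟨m, hm⟩ := hdvd
  have he' : (e : ℤ) ≠ 0 := by positivity
  set A := x.1 with hA
  have hx2' : x.2 = A + (e : ℤ) := by omega
  have hy1' : y.1 = A - 1 := by omega
  have hy2' : y.2 = A + (e : ℤ) - 1 := by omega
  have hxe : x = (A, A + (e : ℤ)) := Prod.ext hA.symm hx2'
  have hye : y = (A - 1, A + (e : ℤ) - 1) := Prod.ext hy1' hy2'
  refine ⟨(m - (m * A - u.1), m * A - u.1), ?_, ?_⟩
  · show (m - (m * A - u.1)) • x + (m * A - u.1) • y = u
    rw [hxe, hye, Prod.ext_iff]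
    simp only [Prod.smul_mk, smul_eq_mul, Prod.mk_add_mk]
    constructor
    · ring
    · show _ = u.2
      linear_combination -hm
  · rintro ⟨q1, q2⟩ hq
    have hq1 : q1 * x.1 + q2 * y.1 = u.1 := by
      have := congrArg Prod.fst hq
      simpa [smul_eq_mul] using this
    have hq2 : q1 * x.2 + q2 * y.2 = u.2 := by
      have := congrArg Prod.snd hq
      simpa [smul_eq_mul] using this
    rw [← hA, hy1'] at hq1
    rw [hx2', hy2'] at hq2
    have hsum : (q1 + q2) * (e : ℤ) = m * (e : ℤ) := by nlinarith [hm]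
    have hsum' : q1 + q2 = m := mul_right_cancel₀ he' hsum
    have hq2' : q2 = m * A - u.1 := by linear_combination A * hsum' - hq1
    have hq1' : q1 = m - (m * A - u.1) := by omega
    simp [hq1', hq2']
end
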